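/- arXiv:1605.06034 — 3 statements merged into one kernel-verified Lean document; each statement's English description precedes it below -/
import Mathlib

section
/- Let H be a complex Hilbert space, let A and B be positive bounded operators on H, and let T be a bounded operator on H such that A = B ∘ T. Then A ≤ ‖T‖ · B in the Loewner order (i.e., ‖T‖ · B − A is a positive operator). -/
/-!
Since `B ∘ T = A` is self-adjoint, `T` is symmetric for the semi-inner product
`⟪x, y⟫_B = ⟪B x, y⟫`. Cauchy–Schwarz for this form gives
`⟪T^k v, v⟫_B ^ 2 ≤ ⟪T^(2k) v, v⟫_B ⟪v, v⟫_B`, and iterating along `k = 2^n` yields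
`⟪T v, v⟫_B ^ (2^n) ≤ ⟪T^(2^n) v, v⟫_B ⟪v, v⟫_B ^ (2^n - 1)
  ≤ ‖B‖ ‖v‖² ‖T‖^(2^n) ⟪v, v⟫_B ^ (2^n - 1)`.
Taking `2^n`-th roots and letting `n → ∞` leaves `⟪A v, v⟫ ≤ ‖T‖ ⟪B v, v⟫`.
-/

open Filter Topology

theorem pow_two_pow_le_of_sq_le_succ {α : Type*} [Semiring α] [PartialOrder α] [IsOrderedRing α]
    {t : ℕ → α} (h0 : 0 ≤ t 0) (h : ∀ n, t n ^ 2 ≤ t (n + 1)) (n : ℕ) :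
    t 0 ^ 2 ^ n ≤ t n := by
  induction n with
  | zero => simp
  | succ n ih =>
    calc t 0 ^ 2 ^ (n + 1) = (t 0 ^ 2 ^ n) ^ 2 := by rw [pow_succ, pow_mul]
      _ ≤ t n ^ 2 := pow_le_pow_left₀ (pow_nonneg h0 _) ih 2
      _ ≤ t (n + 1) := h n

theorem le_of_pow_le_mul_pow {x y D : ℝ} {k : ℕ → ℕ} (hy : 0 ≤ y)
    (hk : Tendsto k atTop atTop) (h : ∀ n, x ^ k n ≤ D * y ^ k n) : x ≤ y := by
  by_contra! hxy
  have hx : 0 < x := hy.trans_lt hxy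
  have hlim : Tendsto (fun n => D * (y / x) ^ k n) atTop (𝓝 0) := by
    simpa using ((tendsto_pow_atTop_nhds_zero_of_lt_one (div_nonneg hy hx.le)
      ((div_lt_one hx).2 hxy)).comp hk).const_mul D
  obtain ⟨n, hn⟩ := (hlim.eventually (gt_mem_nhds one_pos)).exists
  rw [div_pow, mul_div_assoc', div_lt_one (pow_pos hx _)] at hn
  exact (h n).not_gt hn

theorem le_mul_of_sq_le_succ_mul {s : ℕ → ℝ} {b r C : ℝ} (hb : 0 ≤ b) (hr : 0 ≤ r)
    (hrec : ∀ n, s n ^ 2 ≤ s (n + 1) * b) (hbound : ∀ n, s n ≤ C * r ^ 2 ^ n) :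
    s 0 ≤ r * b := by
  obtain rfl | hb := hb.eq_or_lt
  · nlinarith [hrec 0]
  rcases le_or_gt (s 0) 0 with hs | hs
  · exact hs.trans (mul_nonneg hr hb.le)
  set t : ℕ → ℝ := fun n => s n / b
  have ht : ∀ n, t n ^ 2 ≤ t (n + 1) := fun n => by
    simp only [t, div_pow, div_le_div_iff₀ (pow_pos hb 2) hb]
    nlinarith [hrec n]
  have hle : ∀ n, t 0 ^ 2 ^ n ≤ C / b * r ^ 2 ^ n := fun n =>
    (pow_two_pow_le_of_sq_le_succ (div_nonneg hs.le hb.le) ht n).trans <| by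
      rw [div_mul_eq_mul_div]; exact div_le_div_of_nonneg_right (hbound n) hb.le
  exact (div_le_iff₀ hb).1 <| le_of_pow_le_mul_pow hr
    (tendsto_pow_atTop_atTop_of_one_lt one_lt_two) hle

namespace ContinuousLinearMap

variable {𝕜 E : Type*} [RCLike 𝕜] [NormedAddCommGroup E] [InnerProductSpace 𝕜 E]

local notation "⟪" x ", " y "⟫" => @inner 𝕜 _ _ x y

open RCLike

theorem IsPositive.re_inner_sq_le {B : E →L[𝕜] E} (hB : B.IsPositive) (x y : E) :
    re ⟪B x, y⟫ ^ 2 ≤ re ⟪B x, x⟫ * re ⟪B y, y⟫ := by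
  have hyx : re ⟪B y, x⟫ = re ⟪B x, y⟫ := by
    rw [hB.inner_left_eq_inner_right, inner_re_symm]
  have hquad : ∀ t : ℝ, 0 ≤ re ⟪B y, y⟫ * (t * t) + 2 * re ⟪B x, y⟫ * t + re ⟪B x, x⟫ := by
    intro t
    have hpos := hB.re_inner_nonneg_left (x + (t : 𝕜) • y)
    simp only [map_add, map_smul, inner_add_left, inner_add_right, inner_smul_left,
      inner_smul_right, conj_ofReal, re_ofReal_mul, hyx] at hpos
    linarith
  have hdiscr := discrim_le_zero hquad
  rw [discrim] at hdiscr
  linarith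

theorem inner_apply_pow_eq {B T : E →L[𝕜] E} (hB : B.IsSymmetric) (hBT : (B ∘L T).IsSymmetric)
    (k : ℕ) (x y : E) : ⟪B ((T ^ k) x), y⟫ = ⟪B x, (T ^ k) y⟫ := by
  induction k generalizing x with
  | zero => rfl
  | succ k ih =>
    calc ⟪B ((T ^ (k + 1)) x), y⟫ = ⟪B (T x), (T ^ k) y⟫ := by
          rw [pow_succ, mul_apply_eq_comp, ih]
      _ = ⟪x, B (T ((T ^ k) y))⟫ := hBT _ _
      _ = ⟪B x, (T ^ (k + 1)) y⟫ := by rw [pow_succ', mul_apply_eq_comp]; exact (hB _ _).symm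

theorem re_inner_apply_pow_sq_le {B T : E →L[𝕜] E} (hB : B.IsPositive)
    (hBT : (B ∘L T).IsSymmetric) (k : ℕ) (v : E) :
    re ⟪B ((T ^ k) v), v⟫ ^ 2 ≤ re ⟪B ((T ^ (2 * k)) v), v⟫ * re ⟪B v, v⟫ := by
  rw [two_mul, pow_add, mul_apply_eq_comp,
    inner_apply_pow_eq hB.isSymmetric hBT k ((T ^ k) v) v]
  exact hB.re_inner_sq_le ((T ^ k) v) v

theorem norm_pow_apply_le (T : E →L[𝕜] E) (k : ℕ) (v : E) : ‖(T ^ k) v‖ ≤ ‖T‖ ^ k * ‖v‖ := by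
  induction k with
  | zero => simp
  | succ k ih =>
    rw [pow_succ', mul_apply_eq_comp, pow_succ', mul_assoc]
    exact T.le_opNorm_of_le ih

theorem re_inner_apply_pow_le (B T : E →L[𝕜] E) (k : ℕ) (v : E) :
    re ⟪B ((T ^ k) v), v⟫ ≤ ‖B‖ * ‖v‖ ^ 2 * ‖T‖ ^ k := by
  calc re ⟪B ((T ^ k) v), v⟫ ≤ ‖B ((T ^ k) v)‖ * ‖v‖ :=
        (re_le_norm _).trans (norm_inner_le_norm _ _)
    _ ≤ ‖B‖ * (‖T‖ ^ k * ‖v‖) * ‖v‖ := by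
      gcongr
      exact B.le_opNorm_of_le (T.norm_pow_apply_le k v)
    _ = ‖B‖ * ‖v‖ ^ 2 * ‖T‖ ^ k := by ring

theorem IsPositive.re_inner_comp_apply_le {B T : E →L[𝕜] E} (hB : B.IsPositive)
    (hBT : (B ∘L T).IsSymmetric) (v : E) : re ⟪(B ∘L T) v, v⟫ ≤ ‖T‖ * re ⟪B v, v⟫ := by
  simpa using le_mul_of_sq_le_succ_mul (s := fun n => re ⟪B ((T ^ 2 ^ n) v), v⟫)
    (hB.re_inner_nonneg_left v) (norm_nonneg T)
    (fun n => by simpa [pow_succ'] using re_inner_apply_pow_sq_le hB hBT (2 ^ n) v)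
    (fun n => re_inner_apply_pow_le B T (2 ^ n) v)

end ContinuousLinearMap

open ContinuousLinearMap

theorem contraction_majorisation_general {H : Type*} [NormedAddCommGroup H]
    [InnerProductSpace ℂ H]
    (A B T : H →L[ℂ] H) (hA : A.IsPositive) (hB : B.IsPositive)
    (hABT : A = B ∘L T) :
    ((‖T‖ : ℂ) • B - A).IsPositive := by
  subst hABT
  refine ⟨(hB.isSymmetric.smul (RCLike.conj_ofReal _)).sub hA.isSymmetric, fun v => ?_⟩
  have hle := hB.re_inner_comp_apply_le hA.isSymmetric v
  simp only [reApplyInnerSelf, sub_apply, smul_apply, inner_sub_left, inner_smul_left,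
    Complex.conj_ofReal, map_sub, RCLike.re_to_complex, Complex.re_ofReal_mul] at hle ⊢
  linarith

/-- If `A` and `B` are positive bounded operators on a complex Hilbert
space `H` and `T` is a bounded operator with `A = B ∘ T`, then `A ≤ ‖T‖ • B` in the
Loewner order, i.e. `‖T‖ • B - A` is a positive operator. -/
theorem contraction_majorisation {H : Type*} [NormedAddCommGroup H]
    [InnerProductSpace ℂ H] [CompleteSpace H]
    (A B T : H →L[ℂ] H) (hA : A.IsPositive) (hB : B.IsPositive)
    (hABT : A = B ∘L T) :
    ((‖T‖ : ℂ) • B - A).IsPositive :=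
  contraction_majorisation_general A B T hA hB hABT
end

section
/- Let K and H be complex Hilbert spaces and let T : K → H be a bounded linear contraction (‖T‖ ≤ 1). Define the operator U_T on K ⊕ H by U_T(k, h) = ((1_K − T*T)^{1/2} k + T* h, T k − (1_H − TT*)^{1/2} h). Then U_T is a unitary operator on K ⊕ H, and for every k ∈ K one has T k = P(U_T(ι k)), where ι : K → K ⊕ H is the inclusion k ↦ (k, 0) and P : K ⊕ H → H is the projection (k, h) ↦ h. In particular, every contraction between Hilbert spaces dilates to a unitary on the direct sum. -/
/-!
Write `D = (1 - T*T)^{1/2}` and `D' = (1 - TT*)^{1/2}`. The whole proof rests on the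
intertwining relation `T D = D' T`. It follows by passing to `K ⊕ H`: there
`S = [[0, T*], [T, 0]]` is self-adjoint with `S² = diag(T*T, TT*)`, so the positive operator
`diag(D, D')` squares to `1 - S²` and is therefore `(1 - S²)^{1/2}`. It thus commutes with `S`,
and comparing the lower-left entries gives `T D = D' T`.

Given the intertwining relation, `U_T = [[D, T*], [T, -D']]` is self-adjoint and block
multiplication gives `U_T² = 1`, so `U_T` is unitary.
-/

open ContinuousLinearMap WithLp
open scoped ComplexOrder

@[ext]
lemma WithLp.prod_ext {p : ENNReal} {α β : Type*} {x y : WithLp p (α × β)}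
    (h₁ : x.fst = y.fst) (h₂ : x.snd = y.snd) : x = y :=
  (WithLp.ext_iff p).mpr (Prod.ext h₁ h₂)

section BlockOperator

variable {𝕜 E F : Type*} [NormedField 𝕜]
  [NormedAddCommGroup E] [NormedSpace 𝕜 E] [NormedAddCommGroup F] [NormedSpace 𝕜 F]

def blockOp (A : E →L[𝕜] E) (B : F →L[𝕜] E) (C : E →L[𝕜] F) (D : F →L[𝕜] F) :
    WithLp 2 (E × F) →L[𝕜] WithLp 2 (E × F) :=
  (prodContinuousLinearEquiv 2 𝕜 E F).symm.toContinuousLinearMap ∘L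
    ((A ∘L fstL 2 𝕜 E F + B ∘L sndL 2 𝕜 E F).prod (C ∘L fstL 2 𝕜 E F + D ∘L sndL 2 𝕜 E F))

variable {A A' : E →L[𝕜] E} {B B' : F →L[𝕜] E} {C C' : E →L[𝕜] F} {D D' : F →L[𝕜] F}

@[simp]
lemma blockOp_apply (x : WithLp 2 (E × F)) :
    blockOp A B C D x = toLp 2 (A x.fst + B x.snd, C x.fst + D x.snd) := rfl

lemma blockOp_add :
    blockOp A B C D + blockOp A' B' C' D' = blockOp (A + A') (B + B') (C + C') (D + D') := by
  ext x <;> simp <;> abel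

lemma blockOp_mul :
    blockOp A B C D * blockOp A' B' C' D' =
      blockOp (A * A' + B ∘L C') (A ∘L B' + B ∘L D') (C ∘L A' + D ∘L C') (C ∘L B' + D * D') := by
  ext x <;> simp <;> abel

lemma blockOp_one : blockOp (1 : E →L[𝕜] E) 0 0 (1 : F →L[𝕜] F) = 1 := by
  ext x <;> simp

lemma blockOp_inj :
    blockOp A B C D = blockOp A' B' C' D' ↔ A = A' ∧ B = B' ∧ C = C' ∧ D = D' := by
  refine ⟨fun h => ?_, by rintro ⟨rfl, rfl, rfl, rfl⟩; rfl⟩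
  have h₁ (x : E) := congr(($h (toLp 2 (x, 0))))
  have h₂ (y : F) := congr(($h (toLp 2 (0, y))))
  simp only [blockOp_apply, toLp_fst, toLp_snd, map_zero, add_zero, zero_add,
    (toLp_injective 2).eq_iff, Prod.mk.injEq] at h₁ h₂
  exact ⟨ext fun x => (h₁ x).1, ext fun y => (h₂ y).1, ext fun x => (h₁ x).2,
    ext fun y => (h₂ y).2⟩

end BlockOperator

section BlockOperatorAdjoint

variable {𝕜 E F : Type*} [RCLike 𝕜]
  [NormedAddCommGroup E] [InnerProductSpace 𝕜 E] [CompleteSpace E]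
  [NormedAddCommGroup F] [InnerProductSpace 𝕜 F] [CompleteSpace F]
  {A : E →L[𝕜] E} {B : F →L[𝕜] E} {C : E →L[𝕜] F} {D : F →L[𝕜] F}

lemma adjoint_blockOp :
    adjoint (blockOp A B C D) = blockOp (adjoint A) (adjoint C) (adjoint B) (adjoint D) := by
  refine ((eq_adjoint_iff _ _).mpr fun x y => ?_).symm
  simp only [blockOp_apply, prod_inner_apply, ofLp_fst, ofLp_snd, inner_add_left,
    inner_add_right, adjoint_inner_left]
  ring

lemma blockOp_nonneg (hA : 0 ≤ A) (hD : 0 ≤ D) : 0 ≤ blockOp A 0 0 D := by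
  rw [nonneg_iff_isPositive, isPositive_iff'] at *
  refine ⟨?_, fun x => ?_⟩
  · rw [IsSelfAdjoint, star_eq_adjoint, adjoint_blockOp, map_zero, map_zero, hA.1.adjoint_eq,
      hD.1.adjoint_eq]
  · simp only [blockOp_apply, prod_inner_apply, ofLp_fst, ofLp_snd, zero_apply, add_zero,
      zero_add]
    exact add_nonneg (hA.2 _) (hD.2 _)

end BlockOperatorAdjoint

section Contraction

variable {K H : Type*} [NormedAddCommGroup K] [InnerProductSpace ℂ K] [CompleteSpace K]
  [NormedAddCommGroup H] [InnerProductSpace ℂ H] [CompleteSpace H] {T : K →L[ℂ] H}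

lemma one_sub_adjoint_comp_self_nonneg (hT : ‖T‖ ≤ 1) : 0 ≤ 1 - adjoint T ∘L T := by
  have h₀ : 0 ≤ adjoint T ∘L T := (nonneg_iff_isPositive _).mpr (isPositive_adjoint_comp_self T)
  rw [sub_nonneg, ← CStarAlgebra.norm_le_one_iff_of_nonneg _ h₀, norm_adjoint_comp_self]
  nlinarith [norm_nonneg T]

lemma one_sub_comp_adjoint_nonneg (hT : ‖T‖ ≤ 1) : 0 ≤ 1 - T ∘L adjoint T := by
  simpa using one_sub_adjoint_comp_self_nonneg (T := adjoint T) (by simpa using hT)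

set_option maxHeartbeats 400000 in
set_option synthInstance.maxHeartbeats 100000 in
theorem comp_sqrt_one_sub_adjoint_comp_self (hT : ‖T‖ ≤ 1) :
    T ∘L CFC.sqrt (1 - adjoint T ∘L T) = CFC.sqrt (1 - T ∘L adjoint T) ∘L T := by
  set S := blockOp 0 (adjoint T) T 0
  set W := blockOp (CFC.sqrt (1 - adjoint T ∘L T)) 0 0 (CFC.sqrt (1 - T ∘L adjoint T))
  have hWW : W * W = 1 - S * S := by
    rw [eq_sub_iff_add_eq, blockOp_mul, blockOp_mul, blockOp_add, ← blockOp_one,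
      CFC.sqrt_mul_sqrt_self _ (one_sub_adjoint_comp_self_nonneg hT),
      CFC.sqrt_mul_sqrt_self _ (one_sub_comp_adjoint_nonneg hT)]
    simp only [zero_comp, comp_zero, mul_zero, add_zero, zero_add, sub_add_cancel]
  have hW₀ : 0 ≤ W := blockOp_nonneg (CFC.sqrt_nonneg _) (CFC.sqrt_nonneg _)
  have hW : CFC.sqrt (1 - S * S) = W := CFC.sqrt_unique hWW hW₀
  have hWS : W * S = S * W := by
    have hS : Commute (1 - S * S) S :=
      (Commute.one_left S).sub_left ((Commute.refl S).mul_left (Commute.refl S))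
    rw [← hW, CFC.sqrt_eq_cfc]
    exact (hS.cfc_nnreal _).eq
  rw [blockOp_mul, blockOp_mul, blockOp_inj] at hWS
  simpa using hWS.2.2.1.symm

variable (T) in
noncomputable def unitaryDilation : WithLp 2 (K × H) →L[ℂ] WithLp 2 (K × H) :=
  blockOp (CFC.sqrt (1 - adjoint T ∘L T)) (adjoint T) T (-CFC.sqrt (1 - T ∘L adjoint T))

lemma unitaryDilation_apply (x : WithLp 2 (K × H)) :
    unitaryDilation T x = toLp 2 (CFC.sqrt (1 - adjoint T ∘L T) x.fst + adjoint T x.snd,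
      T x.fst - CFC.sqrt (1 - T ∘L adjoint T) x.snd) := by
  simp [unitaryDilation, sub_eq_add_neg]

lemma isSelfAdjoint_unitaryDilation : IsSelfAdjoint (unitaryDilation T) := by
  rw [IsSelfAdjoint, star_eq_adjoint, unitaryDilation, adjoint_blockOp, adjoint_adjoint, map_neg,
    (CFC.sqrt_nonneg _).isSelfAdjoint.adjoint_eq, (CFC.sqrt_nonneg _).isSelfAdjoint.adjoint_eq]

lemma unitaryDilation_mul_self (hT : ‖T‖ ≤ 1) : unitaryDilation T * unitaryDilation T = 1 := by
  have hT' : ‖adjoint T‖ ≤ 1 := by rwa [LinearIsometryEquiv.norm_map]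
  have h_adjoint := comp_sqrt_one_sub_adjoint_comp_self hT'
  rw [adjoint_adjoint] at h_adjoint
  rw [unitaryDilation, blockOp_mul, ← blockOp_one, neg_mul_neg,
    CFC.sqrt_mul_sqrt_self _ (one_sub_adjoint_comp_self_nonneg hT),
    CFC.sqrt_mul_sqrt_self _ (one_sub_comp_adjoint_nonneg hT), comp_neg, neg_comp, h_adjoint,
    comp_sqrt_one_sub_adjoint_comp_self hT]
  simp only [sub_add_cancel, add_neg_cancel, add_sub_cancel]

lemma unitaryDilation_mem_unitary (hT : ‖T‖ ≤ 1) : unitaryDilation T ∈ unitary _ := by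
  rw [Unitary.mem_iff, isSelfAdjoint_unitaryDilation.star_eq, unitaryDilation_mul_self hT]
  exact ⟨rfl, rfl⟩

end Contraction

set_option synthInstance.maxHeartbeats 1000000 in
/-- Every contraction `T : K → H` between complex Hilbert spaces dilates
to a unitary on the Hilbert direct sum `K ⊕ H`: the operator
`U_T(k, h) = ((1 - T*T)^{1/2} k + T* h, T k - (1 - TT*)^{1/2} h)` is unitary (here realised
as a surjective linear isometry of `K ⊕₂ H`), and `T k = P (U_T (ι k))` for every `k ∈ K`,
where `ι k = (k, 0)` and `P (k, h) = h`. -/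
theorem contraction_unitary_dilation {K H : Type*}
    [NormedAddCommGroup K] [InnerProductSpace ℂ K] [CompleteSpace K]
    [NormedAddCommGroup H] [InnerProductSpace ℂ H] [CompleteSpace H]
    (T : K →L[ℂ] H) (hT : ‖T‖ ≤ 1) :
    ∃ U : WithLp 2 (K × H) ≃ₗᵢ[ℂ] WithLp 2 (K × H),
      (∀ k h, U ((WithLp.equiv 2 (K × H)).symm (k, h)) =
          (WithLp.equiv 2 (K × H)).symm
            (CFC.sqrt (1 - ContinuousLinearMap.adjoint T ∘L T) k +
                ContinuousLinearMap.adjoint T h,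
              T k - CFC.sqrt (1 - T ∘L ContinuousLinearMap.adjoint T) h)) ∧
      ∀ k : K, T k = (WithLp.equiv 2 (K × H) (U ((WithLp.equiv 2 (K × H)).symm (k, 0)))).2 := by
  refine ⟨Unitary.linearIsometryEquiv ⟨unitaryDilation T, unitaryDilation_mem_unitary hT⟩,
    fun k h => unitaryDilation_apply _, fun k => ?_⟩
  show T k = (unitaryDilation T (toLp 2 (k, 0))).snd
  simp [unitaryDilation_apply]
end

section
/- Let K and H be complex Hilbert spaces, let T : K → H be a bounded linear contraction (‖T‖ ≤ 1), and let u be a unitary operator on K and v a unitary operator on H such that T ∘ u = v ∘ T. Then the unitary dilation U_T on K ⊕ H, defined by U_T(k, h) = ((1_K − T*T)^{1/2} k + T* h, T k − (1_H − TT*)^{1/2} h), commutes with the unitary u ⊕ v on K ⊕ H, i.e., U_T ∘ (u ⊕ v) = (u ⊕ v) ∘ U_T. -/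
/-! Taking adjoints in `T u = v T` and using unitarity gives `T* v = u T*`. Hence `u` commutes
with `T*T` and `v` with `TT*`, so by the continuous functional calculus they commute with the
defect operators `(1 - T*T)^{1/2}` and `(1 - TT*)^{1/2}`. Every entry of the `2 × 2` operator
matrix of `U_T` then intertwines the corresponding components of `u ⊕ v`. -/

namespace ContinuousLinearMap

theorem commute_comp_of_intertwines {R M N : Type*} [Semiring R]
    [TopologicalSpace M] [AddCommMonoid M] [Module R M]
    [TopologicalSpace N] [AddCommMonoid N] [Module R N]
    {T : M →L[R] N} {S : N →L[R] M} {u : M →L[R] M} {v : N →L[R] N}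
    (hT : T ∘L u = v ∘L T) (hS : S ∘L v = u ∘L S) :
    Commute (S ∘L T) u := by
  change (S ∘L T) ∘L u = u ∘L (S ∘L T)
  rw [comp_assoc, hT, ← comp_assoc, hS, comp_assoc]

theorem adjoint_comp_eq_comp_adjoint_of_mem_unitary {𝕜 K H : Type*} [RCLike 𝕜]
    [NormedAddCommGroup K] [InnerProductSpace 𝕜 K] [CompleteSpace K]
    [NormedAddCommGroup H] [InnerProductSpace 𝕜 H] [CompleteSpace H]
    {T : K →L[𝕜] H} {u : K →L[𝕜] K} {v : H →L[𝕜] H}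
    (hu : u ∈ unitary (K →L[𝕜] K)) (hv : v ∈ unitary (H →L[𝕜] H)) (huv : T ∘L u = v ∘L T) :
    adjoint T ∘L v = u ∘L adjoint T := by
  have hu' : u ∘L adjoint u = .id 𝕜 K := Unitary.mul_star_self_of_mem hu
  have hv' : adjoint v ∘L v = .id 𝕜 H := Unitary.star_mul_self_of_mem hv
  have hadj : adjoint u ∘L adjoint T = adjoint T ∘L adjoint v := by
    rw [← adjoint_comp, ← adjoint_comp, huv]
  calc adjoint T ∘L v = (u ∘L adjoint u) ∘L adjoint T ∘L v := by rw [hu', id_comp]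
    _ = u ∘L (adjoint T ∘L adjoint v) ∘L v := by rw [← hadj]; simp only [comp_assoc]
    _ = u ∘L adjoint T ∘L (adjoint v ∘L v) := by simp only [comp_assoc]
    _ = u ∘L adjoint T := by rw [hv', comp_id]

end ContinuousLinearMap

open ContinuousLinearMap in
theorem dilation_commutes_with_unitaries_general {K H : Type*}
    [NormedAddCommGroup K] [InnerProductSpace ℂ K] [CompleteSpace K]
    [NormedAddCommGroup H] [InnerProductSpace ℂ H] [CompleteSpace H]
    (T : K →L[ℂ] H)
    (u : K →L[ℂ] K) (hu : u ∈ unitary (K →L[ℂ] K))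
    (v : H →L[ℂ] H) (hv : v ∈ unitary (H →L[ℂ] H))
    (huv : T ∘L u = v ∘L T) :
    ∀ (k : K) (h : H),
      (CFC.sqrt (1 - ContinuousLinearMap.adjoint T ∘L T) (u k) +
          ContinuousLinearMap.adjoint T (v h),
        T (u k) - CFC.sqrt (1 - T ∘L ContinuousLinearMap.adjoint T) (v h)) =
      (u (CFC.sqrt (1 - ContinuousLinearMap.adjoint T ∘L T) k +
          ContinuousLinearMap.adjoint T h),
        v (T k - CFC.sqrt (1 - T ∘L ContinuousLinearMap.adjoint T) h)) := by
  intro k h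
  have hTv := adjoint_comp_eq_comp_adjoint_of_mem_unitary hu hv huv
  have hK : CFC.sqrt (1 - adjoint T ∘L T) ∘L u = u ∘L CFC.sqrt (1 - adjoint T ∘L T) :=
    ((Commute.one_left u).sub_left (commute_comp_of_intertwines huv hTv)).cfcₙ_nnreal _
  have hH : CFC.sqrt (1 - T ∘L adjoint T) ∘L v = v ∘L CFC.sqrt (1 - T ∘L adjoint T) :=
    ((Commute.one_left v).sub_left (commute_comp_of_intertwines hTv huv)).cfcₙ_nnreal _
  rw [← comp_apply (adjoint T) v, hTv, ← comp_apply T u, huv, ← comp_apply _ u, hK,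
    ← comp_apply _ v, hH]
  simp only [comp_apply, map_add, map_sub]

set_option synthInstance.maxHeartbeats 1000000 in
/-- Let `T : K → H` be a contraction between complex Hilbert spaces and
let `u`, `v` be unitaries on `K`, `H` with `T ∘ u = v ∘ T`. Then the unitary dilation
`U_T(k, h) = ((1 - T*T)^{1/2} k + T* h, T k - (1 - TT*)^{1/2} h)` commutes with `u ⊕ v`,
i.e. `U_T ((u ⊕ v)(k, h)) = (u ⊕ v) (U_T (k, h))` for all `k ∈ K`, `h ∈ H`. -/
theorem dilation_commutes_with_unitaries {K H : Type*}
    [NormedAddCommGroup K] [InnerProductSpace ℂ K] [CompleteSpace K]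
    [NormedAddCommGroup H] [InnerProductSpace ℂ H] [CompleteSpace H]
    (T : K →L[ℂ] H) (hT : ‖T‖ ≤ 1)
    (u : K →L[ℂ] K) (hu : u ∈ unitary (K →L[ℂ] K))
    (v : H →L[ℂ] H) (hv : v ∈ unitary (H →L[ℂ] H))
    (huv : T ∘L u = v ∘L T) :
    ∀ (k : K) (h : H),
      (CFC.sqrt (1 - ContinuousLinearMap.adjoint T ∘L T) (u k) +
          ContinuousLinearMap.adjoint T (v h),
        T (u k) - CFC.sqrt (1 - T ∘L ContinuousLinearMap.adjoint T) (v h)) =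
      (u (CFC.sqrt (1 - ContinuousLinearMap.adjoint T ∘L T) k +
          ContinuousLinearMap.adjoint T h),
        v (T k - CFC.sqrt (1 - T ∘L ContinuousLinearMap.adjoint T) h)) :=
  dilation_commutes_with_unitaries_general T u hu v hv huv
end
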